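/- Assume the null independence-across-studies condition (with arbitrary dependence among p-values within each study), null p-values stochastically at least uniform, and stable selection rules S₁, S₂. Let 𝒮_i = S_i(P_i), S_i = |𝒮_i|, α₂ = α−α₁, and write H(k) = Σ_{l=1}^{k} 1/l. Define R = max{r ∈ ℕ : #{j ∈ 𝒮₁∩𝒮₂ : P_{1j} ≤ rα₁/(S₂·H(S₂)) and P_{2j} ≤ rα₂/(S₁·H(S₁))} = r} and reject ℛ = {j ∈ 𝒮₁∩𝒮₂ : P_{1j} ≤ Rα₁/(S₂·H(S₂)) and P_{2j} ≤ Rα₂/(S₁·H(S₁))}. Then the FDR for replicability analysis satisfies E[|ℛ ∩ {j : (H_{1j},H_{2j}) ≠ (1,1)}| / max(|ℛ|,1)] ≤ α. (Theorem 2, item 2: the harmonic-sum-corrected procedure is valid under arbitrary within-study dependence.) -/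

import Mathlib

/-!
Fix a null feature `j` of study 1 and write `s = |S₂(P₂)|`, `a = α₁ / (s H(s))`. If `j` is
rejected among `R ≥ 1` rejections then `P₁ⱼ ≤ R a`, and the weights `w_s(r) = 1/r - 1/(r+1)`
(`r < s`), `w_s(s) = 1/s` telescope to `Σ_{r=R}^{s} w_s(r) = 1/R`, so
`1{j ∈ ℛ} / R ≤ Σ_{r=1}^{s} w_s(r) 1{P₁ⱼ ≤ r a}`.
The right side involves no other p-value of study 1, which is why arbitrary dependence within a
study is harmless, and it depends on study 2 only through `S₂(P₂)`, which is independent of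
`P₁ⱼ`. Conditioning on `S₂(P₂) = T` and using super-uniformity, its expectation is at most
`P(S₂(P₂) = T) · Σ_r w_s(r) r a = P(S₂(P₂) = T) · α₁ / |T|`, since `Σ_r r w_s(r) = H(s)`.
Summing over `j ∈ T` and then over `T` bounds the contribution of the nulls of study 1 by `α₁`;
the remaining nulls, those of study 2, contribute at most `α - α₁` in the same way.
-/

open MeasureTheory ProbabilityTheory

/-- A selection rule is stable if, for any selected feature, changing its p-value so
that the feature is still selected, while all other p-values are held fixed, does not
change the set of selected features. -/
def StableSelection {m : ℕ} (S : (Fin m → ℝ) → Finset (Fin m)) : Prop :=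
  ∀ p p' : Fin m → ℝ, ∀ j, j ∈ S p → j ∈ S p' → (∀ k, k ≠ j → p' k = p k) → S p' = S p

/-- The partial harmonic sum `H(k) = Σ_{l=1}^k 1/l`. -/
noncomputable def harmonic' (k : ℕ) : ℝ := ∑ l ∈ Finset.Icc 1 k, (1 : ℝ) / l

/-- The step-up count `R` of the two-study FDR-replicability procedure on the selected
set `sel`, with per-unit thresholds `a1, a2`:  the largest `r` such that exactly `r`
features `j ∈ sel` satisfy `q1 j ≤ r·a1` and `q2 j ≤ r·a2`. -/
noncomputable def stepUpCount {m : ℕ} (sel : Set (Fin m)) (q1 q2 : Fin m → ℝ)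
    (a1 a2 : ℝ) : ℕ :=
  sSup {r : ℕ | Nat.card {j : Fin m // j ∈ sel ∧ q1 j ≤ r * a1 ∧ q2 j ≤ r * a2} = r}

/-- The rejection region of the step-up procedure. -/
noncomputable def stepUpReject {m : ℕ} (sel : Set (Fin m)) (q1 q2 : Fin m → ℝ)
    (a1 a2 : ℝ) : Set (Fin m) :=
  {j | j ∈ sel ∧ q1 j ≤ (stepUpCount sel q1 q2 a1 a2) * a1
      ∧ q2 j ≤ (stepUpCount sel q1 q2 a1 a2) * a2}

/-- The false discovery proportion for replicability analysis of a rejection set. -/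
noncomputable def fdpRepl {m : ℕ} (H1 H2 : Fin m → Bool) (Rset : Set (Fin m)) : ℝ :=
  (Nat.card {j : Fin m // j ∈ Rset ∧ (H1 j = false ∨ H2 j = false)} : ℝ) /
    max (Nat.card {j : Fin m // j ∈ Rset} : ℝ) 1

noncomputable def stepWeight (s r : ℕ) : ℝ := if r = s then 1 / s else 1 / r - 1 / (r + 1)

lemma stepWeight_nonneg (s : ℕ) {r : ℕ} (hr : 1 ≤ r) : 0 ≤ stepWeight s r := by
  unfold stepWeight
  split_ifs
  · positivity
  · have hr' : (0 : ℝ) < r := by exact_mod_cast hr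
    exact sub_nonneg.mpr (one_div_le_one_div_of_le hr' (by linarith))

lemma sum_Icc_stepWeight {R s : ℕ} (hRs : R ≤ s) :
    ∑ r ∈ Finset.Icc R s, stepWeight s r = 1 / R := by
  have htelescope : ∑ r ∈ Finset.Ico R s, stepWeight s r = 1 / R - 1 / s := by
    calc ∑ r ∈ Finset.Ico R s, stepWeight s r
        = ∑ r ∈ Finset.Ico R s, (-(1 / ((r + 1 : ℕ) : ℝ)) - -(1 / (r : ℝ))) := by
          refine Finset.sum_congr rfl fun r hr => ?_
          rw [stepWeight, if_neg (Finset.mem_Ico.mp hr).2.ne]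
          push_cast
          ring
      _ = 1 / R - 1 / s := by
          rw [Finset.sum_Ico_sub (fun r : ℕ => -(1 / (r : ℝ))) hRs]
          ring
  rw [← Finset.Ico_insert_right hRs, Finset.sum_insert Finset.right_notMem_Ico, htelescope,
    stepWeight, if_pos rfl]
  ring

lemma sum_Icc_mul_stepWeight (s : ℕ) :
    ∑ r ∈ Finset.Icc 1 s, (r : ℝ) * stepWeight s r = harmonic' s := by
  calc ∑ r ∈ Finset.Icc 1 s, (r : ℝ) * stepWeight s r
      = ∑ r ∈ Finset.Icc 1 s, ∑ _R ∈ Finset.Icc 1 r, stepWeight s r := by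
        simp [Finset.sum_const]
    _ = ∑ R ∈ Finset.Icc 1 s, ∑ r ∈ Finset.Icc R s, stepWeight s r :=
        Finset.sum_comm' fun r R => by simp only [Finset.mem_Icc]; omega
    _ = harmonic' s :=
        Finset.sum_congr rfl fun R hR =>
          sum_Icc_stepWeight (Finset.mem_Icc.mp hR).2

lemma harmonic'_nonneg (s : ℕ) : 0 ≤ harmonic' s :=
  Finset.sum_nonneg fun _ _ => by positivity

lemma one_le_harmonic' {s : ℕ} (hs : 1 ≤ s) : 1 ≤ harmonic' s := by
  calc (1 : ℝ) = 1 / ((1 : ℕ) : ℝ) := by simp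
    _ ≤ harmonic' s := Finset.single_le_sum (f := fun l : ℕ => (1 : ℝ) / l)
        (fun _ _ => by positivity) (Finset.mem_Icc.mpr ⟨le_rfl, hs⟩)

noncomputable def invRankBound (s : ℕ) (a x : ℝ) : ℝ :=
  ∑ r ∈ Finset.Icc 1 s, if x ≤ r * a then stepWeight s r else 0

lemma invRankBound_nonneg (s : ℕ) (a x : ℝ) : 0 ≤ invRankBound s a x :=
  Finset.sum_nonneg fun _ hr =>
    ite_nonneg (stepWeight_nonneg s (Finset.mem_Icc.mp hr).1) le_rfl

lemma one_div_le_invRankBound {R s : ℕ} {a x : ℝ} (hR : 1 ≤ R) (hRs : R ≤ s) (ha : 0 ≤ a)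
    (hx : x ≤ R * a) : 1 / (R : ℝ) ≤ invRankBound s a x := by
  calc 1 / (R : ℝ) = ∑ r ∈ Finset.Icc R s, stepWeight s r := (sum_Icc_stepWeight hRs).symm
    _ = ∑ r ∈ Finset.Icc R s, if x ≤ r * a then stepWeight s r else 0 := by
        refine Finset.sum_congr rfl fun r hr => (if_pos (hx.trans ?_)).symm
        gcongr
        exact_mod_cast (Finset.mem_Icc.mp hr).1
    _ ≤ invRankBound s a x :=
        Finset.sum_le_sum_of_subset_of_nonneg (Finset.Icc_subset_Icc_left hR) fun r hr _ =>
          ite_nonneg (stepWeight_nonneg s (Finset.mem_Icc.mp hr).1) le_rfl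

lemma measurable_invRankBound (s : ℕ) (a : ℝ) : Measurable (invRankBound s a) :=
  Finset.measurable_sum _ fun _ _ =>
    Measurable.ite measurableSet_Iic measurable_const measurable_const

section StepUp

variable {m : ℕ} {sel : Set (Fin m)} {q1 q2 : Fin m → ℝ} {a1 a2 : ℝ}

lemma stepUpCount_comm : stepUpCount sel q1 q2 a1 a2 = stepUpCount sel q2 q1 a2 a1 := by
  simp only [stepUpCount, and_comm (a := q1 _ ≤ _)]

lemma stepUpReject_comm : stepUpReject sel q1 q2 a1 a2 = stepUpReject sel q2 q1 a2 a1 := by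
  ext j
  simp only [stepUpReject, stepUpCount_comm (q1 := q1)]
  exact and_congr_right' and_comm

lemma card_stepUpReject_eq_stepUpCount (h : 0 < stepUpCount sel q1 q2 a1 a2) :
    Nat.card {k // k ∈ stepUpReject sel q1 q2 a1 a2} = stepUpCount sel q1 q2 a1 a2 := by
  unfold stepUpCount at h ⊢
  set F := {r : ℕ | Nat.card {j // j ∈ sel ∧ q1 j ≤ r * a1 ∧ q2 j ≤ r * a2} = r}
  have hF : F.Nonempty := by
    by_contra hempty
    rw [Set.not_nonempty_iff_eq_empty.mp hempty] at h
    simp at h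
  exact Nat.sSup_mem hF ⟨m, fun r hr => hr ▸ (Finite.card_subtype_le _).trans (by simp)⟩

lemma inv_max_card_stepUpReject_le {T : Finset (Fin m)} (hsel : sel ⊆ T) (ha1 : 0 ≤ a1)
    {j : Fin m} (hj : j ∈ stepUpReject sel q1 q2 a1 a2) :
    1 / max (Nat.card {k // k ∈ stepUpReject sel q1 q2 a1 a2} : ℝ) 1
      ≤ invRankBound T.card a1 (q1 j) := by
  set N := Nat.card {k // k ∈ stepUpReject sel q1 q2 a1 a2}
  set R := stepUpCount sel q1 q2 a1 a2
  have hN : 1 ≤ N := Nat.card_pos_iff.mpr ⟨⟨⟨j, hj⟩⟩, inferInstance⟩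
  have hNT : N ≤ T.card :=
    calc N ≤ Nat.card (T : Set (Fin m)) := Nat.card_mono T.finite_toSet fun k hk => hsel hk.1
      _ = T.card := by simp
  -- `R = 0` can only happen when `q1 j ≤ 0`, where `R` may be replaced by `1`.
  have hRN : max R 1 ≤ N := by
    rcases Nat.eq_zero_or_pos R with h0 | hpos
    · simpa [h0] using hN
    · have hNR : N = R := card_stepUpReject_eq_stepUpCount hpos
      omega
  have hq : q1 j ≤ ((max R 1 : ℕ) : ℝ) * a1 :=
    hj.2.1.trans (by gcongr; exact_mod_cast le_max_left R 1)
  calc 1 / max (N : ℝ) 1 = 1 / N := by rw [max_eq_left (by exact_mod_cast hN)]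
    _ ≤ 1 / ((max R 1 : ℕ) : ℝ) :=
        one_div_le_one_div_of_le (by positivity) (by exact_mod_cast hRN)
    _ ≤ invRankBound T.card a1 (q1 j) :=
        one_div_le_invRankBound (le_max_right R 1) (hRN.trans hNT) ha1 hq

end StepUp

/-- Bounds the contribution `1{j ∈ ℛ} / max(|ℛ|, 1)` of a null feature `j` of one study to the
FDP when the other study selects `T`. -/
noncomputable def nullBound {m : ℕ} (α' : ℝ) (T : Finset (Fin m)) (j : Fin m)
    (x : ℝ) : ℝ :=
  if j ∈ T then invRankBound T.card (α' / (T.card * harmonic' T.card)) x else 0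

lemma nullBound_nonneg {m : ℕ} (α' : ℝ) (T : Finset (Fin m)) (j : Fin m) (x : ℝ) :
    0 ≤ nullBound α' T j x :=
  ite_nonneg (invRankBound_nonneg _ _ _) le_rfl

lemma measurable_nullBound {m : ℕ} (α' : ℝ) (T : Finset (Fin m)) (j : Fin m) :
    Measurable (nullBound α' T j) := by
  unfold nullBound
  by_cases hj : j ∈ T
  · simpa only [hj, if_true] using measurable_invRankBound _ _
  · simpa only [hj, if_false] using measurable_const

lemma inv_max_card_stepUpReject_le_nullBound {m : ℕ} {sel : Set (Fin m)} {T : Finset (Fin m)}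
    (hsel : sel ⊆ T) {q1 q2 : Fin m → ℝ} {α' a2 : ℝ} (hα' : 0 ≤ α') {j : Fin m}
    (hj : j ∈ stepUpReject sel q1 q2 (α' / (T.card * harmonic' T.card)) a2) :
    1 / max (Nat.card {k // k ∈ stepUpReject sel q1 q2 (α' / (T.card * harmonic' T.card)) a2}
      : ℝ) 1 ≤ nullBound α' T j (q1 j) := by
  rw [nullBound, if_pos (Finset.mem_coe.mp (hsel hj.1))]
  exact inv_max_card_stepUpReject_le hsel
    (div_nonneg hα' (mul_nonneg (Nat.cast_nonneg _) (harmonic'_nonneg _))) hj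

lemma fdpRepl_nonneg {m : ℕ} (H1 H2 : Fin m → Bool) (Rset : Set (Fin m)) :
    0 ≤ fdpRepl H1 H2 Rset :=
  div_nonneg (Nat.cast_nonneg _) (zero_le_one.trans (le_max_right _ _))

lemma fdpRepl_le_sum {m : ℕ} {H1 H2 : Fin m → Bool} {Rset : Set (Fin m)} {c : Fin m → ℝ}
    (hc : ∀ j, 0 ≤ c j)
    (h : ∀ j ∈ Rset, (H1 j = false ∨ H2 j = false) →
      1 / max (Nat.card {k // k ∈ Rset} : ℝ) 1 ≤ c j) :
    fdpRepl H1 H2 Rset ≤ ∑ j, c j := by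
  classical
  set D := Finset.univ.filter fun j => j ∈ Rset ∧ (H1 j = false ∨ H2 j = false)
  calc fdpRepl H1 H2 Rset = ∑ j ∈ D, 1 / max (Nat.card {k // k ∈ Rset} : ℝ) 1 := by
        rw [fdpRepl, Finset.sum_const, nsmul_eq_mul, mul_one_div, Nat.card_eq_fintype_card,
          Fintype.card_subtype]
    _ ≤ ∑ j ∈ D, c j := Finset.sum_le_sum fun j hj => h j (Finset.mem_filter.mp hj).2.1
        (Finset.mem_filter.mp hj).2.2
    _ ≤ ∑ j, c j :=
        Finset.sum_le_sum_of_subset_of_nonneg (Finset.subset_univ D) fun j _ _ => hc j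

lemma fdpRepl_stepUpReject_le {m : ℕ} (H1 H2 : Fin m → Bool) (T1 T2 : Finset (Fin m))
    (q1 q2 : Fin m → ℝ) {α₁ α₂ : ℝ} (hα₁ : 0 ≤ α₁) (hα₂ : 0 ≤ α₂) :
    fdpRepl H1 H2 (stepUpReject ↑(T1 ∩ T2) q1 q2 (α₁ / (T2.card * harmonic' T2.card))
        (α₂ / (T1.card * harmonic' T1.card)))
      ≤ ∑ j ∈ Finset.univ.filter (H1 · = false), nullBound α₁ T2 j (q1 j)
        + ∑ j ∈ Finset.univ.filter (H2 · = false), nullBound α₂ T1 j (q2 j) := by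
  rw [Finset.sum_filter, Finset.sum_filter, ← Finset.sum_add_distrib]
  refine fdpRepl_le_sum (fun j => add_nonneg (ite_nonneg (nullBound_nonneg ..) le_rfl)
    (ite_nonneg (nullBound_nonneg ..) le_rfl)) fun j hj hnull => ?_
  rcases hnull with h1 | h2
  · rw [if_pos h1]
    exact (inv_max_card_stepUpReject_le_nullBound (Finset.coe_subset.mpr
      Finset.inter_subset_right) hα₁ hj).trans
      (le_add_of_nonneg_right (ite_nonneg (nullBound_nonneg ..) le_rfl))
  · rw [if_pos h2, stepUpReject_comm]
    rw [stepUpReject_comm] at hj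
    exact (inv_max_card_stepUpReject_le_nullBound (Finset.coe_subset.mpr
      Finset.inter_subset_left) hα₂ hj).trans
      (le_add_of_nonneg_left (ite_nonneg (nullBound_nonneg ..) le_rfl))

lemma comp_eq_sum_indicator {Ω ι E : Type*} [Fintype ι] [AddCommMonoid E] (Z : Ω → ι)
    (G : ι → Ω → E) :
    (fun ω => G (Z ω) ω) = fun ω => ∑ t, (Z ⁻¹' {t}).indicator (G t) ω := by
  classical
  ext ω
  simp [Set.indicator_apply]

lemma invRankBound_comp_eq {Ω : Type*} (s : ℕ) (a : ℝ) (X : Ω → ℝ) :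
    (fun ω => invRankBound s a (X ω))
      = fun ω => ∑ r ∈ Finset.Icc 1 s,
          (X ⁻¹' Set.Iic (r * a)).indicator (fun _ => stepWeight s r) ω := by
  ext ω
  refine Finset.sum_congr rfl fun r _ => ?_
  by_cases h : X ω ≤ r * a <;> simp [h]

section Probability

variable {Ω : Type*} [MeasurableSpace Ω] {μ : Measure Ω}

/-- `X` is stochastically at least uniform on `[0, 1]`. -/
def IsSuperUniform (μ : Measure Ω) (X : Ω → ℝ) : Prop :=
  ∀ x ∈ Set.Icc (0 : ℝ) 1, μ {ω | X ω ≤ x} ≤ ENNReal.ofReal x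

lemma IsSuperUniform.measureReal_le [IsProbabilityMeasure μ] {X : Ω → ℝ}
    (hX : IsSuperUniform μ X) {x : ℝ} (hx : 0 ≤ x) : μ.real {ω | X ω ≤ x} ≤ x := by
  rcases le_total x 1 with hx1 | hx1
  · exact (ENNReal.toReal_le_of_le_ofReal hx (hX x ⟨hx, hx1⟩))
  · exact measureReal_le_one.trans hx1

lemma integrable_invRankBound_comp [IsFiniteMeasure μ] (s : ℕ) (a : ℝ) {X : Ω → ℝ}
    (hX : Measurable X) : Integrable (fun ω => invRankBound s a (X ω)) μ := by
  rw [invRankBound_comp_eq]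
  exact integrable_finsetSum _ fun r _ =>
    (integrable_const _).indicator (hX measurableSet_Iic)

lemma integral_invRankBound_le [IsProbabilityMeasure μ] {X : Ω → ℝ} (hX : Measurable X)
    (hunif : IsSuperUniform μ X) (s : ℕ) {a : ℝ} (ha : 0 ≤ a) :
    ∫ ω, invRankBound s a (X ω) ∂μ ≤ a * harmonic' s := by
  rw [invRankBound_comp_eq, integral_finsetSum _ fun r _ =>
    (integrable_const _).indicator (hX measurableSet_Iic)]
  calc ∑ r ∈ Finset.Icc 1 s,
        ∫ ω, (X ⁻¹' Set.Iic (r * a)).indicator (fun _ => stepWeight s r) ω ∂μ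
      = ∑ r ∈ Finset.Icc 1 s, μ.real {ω | X ω ≤ r * a} * stepWeight s r :=
        Finset.sum_congr rfl fun r _ => by
          rw [integral_indicator_const _ (hX measurableSet_Iic), smul_eq_mul]; rfl
    _ ≤ ∑ r ∈ Finset.Icc 1 s, (r * a) * stepWeight s r :=
        Finset.sum_le_sum fun r hr => mul_le_mul_of_nonneg_right
          (hunif.measureReal_le (by positivity)) (stepWeight_nonneg s (Finset.mem_Icc.mp hr).1)
    _ = a * harmonic' s := by
        rw [← sum_Icc_mul_stepWeight, Finset.mul_sum]
        exact Finset.sum_congr rfl fun r _ => by ring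

lemma integrable_nullBound_comp [IsFiniteMeasure μ] {m : ℕ} (α' : ℝ) (T : Finset (Fin m))
    (j : Fin m) {X : Ω → ℝ} (hX : Measurable X) :
    Integrable (fun ω => nullBound α' T j (X ω)) μ := by
  by_cases hj : j ∈ T
  · simpa [nullBound, hj] using integrable_invRankBound_comp _ _ hX
  · simp [nullBound, hj]

lemma integral_nullBound_le [IsProbabilityMeasure μ] {m : ℕ} {α' : ℝ} (hα' : 0 ≤ α')
    (T : Finset (Fin m)) (j : Fin m) {X : Ω → ℝ} (hX : Measurable X)
    (hunif : IsSuperUniform μ X) :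
    ∫ ω, nullBound α' T j (X ω) ∂μ ≤ if j ∈ T then α' / T.card else 0 := by
  by_cases hj : j ∈ T
  · have hs : (0 : ℝ) < T.card := by exact_mod_cast Finset.card_pos.mpr ⟨j, hj⟩
    have hH : 0 < harmonic' T.card := one_pos.trans_le (one_le_harmonic' (by exact_mod_cast hs))
    simp only [nullBound, hj, if_true]
    refine (integral_invRankBound_le hX hunif _ (by positivity)).trans_eq ?_
    field_simp
  · simp [nullBound, hj]

lemma integrable_comp_of_fintype {ι E : Type*} [Fintype ι] [MeasurableSpace ι]
    [MeasurableSingletonClass ι] [NormedAddCommGroup E] {Z : Ω → ι} (hZ : Measurable Z)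
    {G : ι → Ω → E} (hG : ∀ t, Integrable (G t) μ) :
    Integrable (fun ω => G (Z ω) ω) μ := by
  rw [comp_eq_sum_indicator]
  exact integrable_finsetSum _ fun t _ => (hG t).indicator (hZ (measurableSet_singleton t))

lemma ProbabilityTheory.IndepFun.integral_comp_eq_sum {ι β : Type*} [Fintype ι]
    [MeasurableSpace ι] [MeasurableSingletonClass ι] [MeasurableSpace β] {X : Ω → β} {Z : Ω → ι}
    (hXZ : IndepFun X Z μ) (hX : Measurable X) (hZ : Measurable Z) {F : ι → β → ℝ}
    (hF : ∀ t, Measurable (F t)) (hFX : ∀ t, Integrable (fun ω => F t (X ω)) μ) :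
    ∫ ω, F (Z ω) (X ω) ∂μ = ∑ t, μ.real (Z ⁻¹' {t}) * ∫ ω, F t (X ω) ∂μ := by
  rw [comp_eq_sum_indicator Z fun t ω => F t (X ω), integral_finsetSum _ fun t _ =>
    (hFX t).indicator (hZ (measurableSet_singleton t))]
  refine Finset.sum_congr rfl fun t _ => ?_
  have hind : IndepFun (({t} : Set ι).indicator (1 : ι → ℝ) ∘ Z) (F t ∘ X) μ :=
    hXZ.symm.comp (measurable_one.indicator (measurableSet_singleton t)) (hF t)
  calc ∫ ω, (Z ⁻¹' {t}).indicator (fun ω => F t (X ω)) ω ∂μ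
      = ∫ ω, (({t} : Set ι).indicator (1 : ι → ℝ) ∘ Z) ω * (F t ∘ X) ω ∂μ := by
        refine integral_congr_ae (ae_of_all _ fun ω => ?_)
        by_cases h : Z ω = t <;> simp [h]
    _ = (∫ ω, (Z ⁻¹' {t}).indicator (1 : Ω → ℝ) ω ∂μ) *
          ∫ ω, F t (X ω) ∂μ := by
        rw [hind.integral_fun_mul_eq_mul_integral
          ((measurable_one.indicator (measurableSet_singleton t)).comp hZ).aestronglyMeasurable
          ((hF t).comp hX).aestronglyMeasurable]
        rfl
    _ = μ.real (Z ⁻¹' {t}) * ∫ ω, F t (X ω) ∂μ := by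
        rw [integral_indicator_one (hZ (measurableSet_singleton t))]

lemma integrable_nullBound_selection [IsFiniteMeasure μ] {m : ℕ} {X : Ω → ℝ}
    (hX : Measurable X) {Y : Ω → Fin m → ℝ} (hY : Measurable Y) {S : (Fin m → ℝ) → Finset (Fin m)}
    (hS : Measurable S) (α' : ℝ) (j : Fin m) :
    Integrable (fun ω => nullBound α' (S (Y ω)) j (X ω)) μ :=
  integrable_comp_of_fintype (Z := fun ω => S (Y ω)) (hS.comp hY) fun T =>
    integrable_nullBound_comp α' T j hX

lemma integral_sum_nullBound_le [IsProbabilityMeasure μ] {m : ℕ} {X : Fin m → Ω → ℝ}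
    {Y : Ω → Fin m → ℝ} (hY : Measurable Y) {S : (Fin m → ℝ) → Finset (Fin m)}
    (hS : Measurable S) (N : Finset (Fin m)) (hX : ∀ j ∈ N, Measurable (X j))
    (hunif : ∀ j ∈ N, IsSuperUniform μ (X j)) (hind : ∀ j ∈ N, IndepFun (X j) Y μ)
    {α' : ℝ} (hα' : 0 ≤ α') :
    ∫ ω, ∑ j ∈ N, nullBound α' (S (Y ω)) j (X j ω) ∂μ ≤ α' := by
  set p : Finset (Fin m) → ℝ := fun T => μ.real ((fun ω => S (Y ω)) ⁻¹' {T})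
  have hbound : ∀ T : Finset (Fin m), ∑ j, (if j ∈ T then α' / T.card else 0) ≤ α' := by
    intro T
    rw [Finset.sum_ite_mem, Finset.univ_inter, Finset.sum_const, nsmul_eq_mul]
    rcases T.eq_empty_or_nonempty with rfl | hT
    · simpa using hα'
    · rw [mul_div_cancel₀ _ (by exact_mod_cast hT.card_pos.ne')]
  rw [integral_finsetSum _ fun j hj => integrable_nullBound_selection (hX j hj) hY hS α' j]
  calc ∑ j ∈ N, ∫ ω, nullBound α' (S (Y ω)) j (X j ω) ∂μ
      = ∑ j ∈ N, ∑ T, p T * ∫ ω, nullBound α' T j (X j ω) ∂μ :=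
        Finset.sum_congr rfl fun j hj =>
          ((hind j hj).comp measurable_id hS).integral_comp_eq_sum (hX j hj) (hS.comp hY)
            (fun T => measurable_nullBound α' T j)
            (fun T => integrable_nullBound_comp α' T j (hX j hj))
    _ ≤ ∑ j ∈ N, ∑ T, p T * (if j ∈ T then α' / T.card else 0) :=
        Finset.sum_le_sum fun j hj => Finset.sum_le_sum fun T _ =>
          mul_le_mul_of_nonneg_left (integral_nullBound_le hα' T j (hX j hj) (hunif j hj))
            measureReal_nonneg
    _ ≤ ∑ j, ∑ T, p T * (if j ∈ T then α' / T.card else 0) :=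
        Finset.sum_le_sum_of_subset_of_nonneg (Finset.subset_univ N) fun j _ _ =>
          Finset.sum_nonneg fun T _ => mul_nonneg measureReal_nonneg
            (ite_nonneg (div_nonneg hα' (Nat.cast_nonneg _)) le_rfl)
    _ = ∑ T, p T * ∑ j, (if j ∈ T then α' / T.card else 0) := by
        rw [Finset.sum_comm]
        simp only [Finset.mul_sum]
    _ ≤ ∑ T, p T * α' :=
        Finset.sum_le_sum fun T _ => mul_le_mul_of_nonneg_left (hbound T) measureReal_nonneg
    _ = α' := by
        rw [← Finset.sum_mul, sum_measureReal_preimage_singleton (f := fun ω => S (Y ω)) _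
          fun T _ => hS.comp hY (measurableSet_singleton T)]
        simp

end Probability

theorem fdr_replicability_arbitrary_dependence_general
    {Ω : Type*} [MeasurableSpace Ω] (μ : Measure Ω) [IsProbabilityMeasure μ]
    (m : ℕ) (P1 P2 : Ω → Fin m → ℝ) (hP1 : Measurable P1) (hP2 : Measurable P2)
    (H1 H2 : Fin m → Bool)
    -- null p-values are stochastically at least uniform
    (hunif1 : ∀ j, H1 j = false → ∀ x ∈ Set.Icc (0:ℝ) 1,
      μ {ω | P1 ω j ≤ x} ≤ ENNReal.ofReal x)
    (hunif2 : ∀ j, H2 j = false → ∀ x ∈ Set.Icc (0:ℝ) 1,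
      μ {ω | P2 ω j ≤ x} ≤ ENNReal.ofReal x)
    -- null independence-across-studies condition
    (hind1 : ∀ j, (H1 j = false ∨ H2 j = false) → H1 j = false →
      IndepFun (fun ω => P1 ω j) P2 μ)
    (hind2 : ∀ j, (H1 j = false ∨ H2 j = false) → H2 j = false →
      IndepFun (fun ω => P2 ω j) P1 μ)
    -- stable (measurable) selection rules
    (S1 S2 : (Fin m → ℝ) → Finset (Fin m))
    (hS1 : ∀ j, MeasurableSet {p : Fin m → ℝ | j ∈ S1 p})
    (hS2 : ∀ j, MeasurableSet {p : Fin m → ℝ | j ∈ S2 p})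
    (α α₁ : ℝ) (hα₁ : α₁ ∈ Set.Ioo (0:ℝ) α) :
    ∫ ω, fdpRepl H1 H2
        (stepUpReject (↑(S1 (P1 ω) ∩ S2 (P2 ω))) (P1 ω) (P2 ω)
          (α₁ / ((S2 (P2 ω)).card * harmonic' (S2 (P2 ω)).card))
          ((α - α₁) / ((S1 (P1 ω)).card * harmonic' (S1 (P1 ω)).card))) ∂μ
      ≤ α := by
  have hS1' : Measurable S1 := measurable_finset_iff.mpr fun j => measurableSet_setOfPred.mp (hS1 j)
  have hS2' : Measurable S2 := measurable_finset_iff.mpr fun j => measurableSet_setOfPred.mp (hS2 j)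
  have hP1j (j : Fin m) : Measurable fun ω => P1 ω j := (measurable_pi_apply j).comp hP1
  have hP2j (j : Fin m) : Measurable fun ω => P2 ω j := (measurable_pi_apply j).comp hP2
  set N1 := Finset.univ.filter (H1 · = false)
  set N2 := Finset.univ.filter (H2 · = false)
  have hN1 : ∀ j ∈ N1, H1 j = false := fun j hj => (Finset.mem_filter.mp hj).2
  have hN2 : ∀ j ∈ N2, H2 j = false := fun j hj => (Finset.mem_filter.mp hj).2
  have hint1 : Integrable (fun ω => ∑ j ∈ N1, nullBound α₁ (S2 (P2 ω)) j (P1 ω j)) μ :=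
    integrable_finsetSum _ fun j _ => integrable_nullBound_selection (hP1j j) hP2 hS2' α₁ j
  have hint2 :
      Integrable (fun ω => ∑ j ∈ N2, nullBound (α - α₁) (S1 (P1 ω)) j (P2 ω j)) μ :=
    integrable_finsetSum _ fun j _ => integrable_nullBound_selection (hP2j j) hP1 hS1' _ j
  calc _ ≤ ∫ ω, (∑ j ∈ N1, nullBound α₁ (S2 (P2 ω)) j (P1 ω j)
          + ∑ j ∈ N2, nullBound (α - α₁) (S1 (P1 ω)) j (P2 ω j)) ∂μ :=
        integral_mono_of_nonneg (ae_of_all _ fun ω => fdpRepl_nonneg ..) (hint1.add hint2)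
          (ae_of_all _ fun ω => fdpRepl_stepUpReject_le H1 H2 _ _ _ _ hα₁.1.le
            (sub_nonneg.mpr hα₁.2.le))
    _ = ∫ ω, ∑ j ∈ N1, nullBound α₁ (S2 (P2 ω)) j (P1 ω j) ∂μ
          + ∫ ω, ∑ j ∈ N2, nullBound (α - α₁) (S1 (P1 ω)) j (P2 ω j) ∂μ :=
        integral_add hint1 hint2
    _ ≤ α₁ + (α - α₁) := add_le_add
        (integral_sum_nullBound_le hP2 hS2' N1 (fun j _ => hP1j j)
          (fun j hj => hunif1 j (hN1 j hj)) (fun j hj => hind1 j (.inl (hN1 j hj)) (hN1 j hj))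
          hα₁.1.le)
        (integral_sum_nullBound_le hP1 hS1' N2 (fun j _ => hP2j j)
          (fun j hj => hunif2 j (hN2 j hj)) (fun j hj => hind2 j (.inr (hN2 j hj)) (hN2 j hj))
          (sub_nonneg.mpr hα₁.2.le))
    _ = α := add_sub_cancel _ _

/-- Theorem 2, item 2.  Under the null independence-across-studies
condition, with arbitrary dependence among the p-values within each study, null p-values
stochastically at least uniform and stable selection rules, the harmonic-sum-corrected
step-up FDR-replicability procedure, using thresholds `(rα₁/(S₂·H(S₂)), r(α−α₁)/(S₁·H(S₁)))`
where `H(k) = Σ_{l=1}^k 1/l`, controls the FDR for replicability analysis at level `α`. -/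
theorem fdr_replicability_arbitrary_dependence
    {Ω : Type*} [MeasurableSpace Ω] (μ : Measure Ω) [IsProbabilityMeasure μ]
    (m : ℕ) (P1 P2 : Ω → Fin m → ℝ) (hP1 : Measurable P1) (hP2 : Measurable P2)
    (H1 H2 : Fin m → Bool)
    (hrange1 : ∀ ω j, P1 ω j ∈ Set.Icc (0:ℝ) 1) (hrange2 : ∀ ω j, P2 ω j ∈ Set.Icc (0:ℝ) 1)
    -- null p-values are stochastically at least uniform
    (hunif1 : ∀ j, H1 j = false → ∀ x ∈ Set.Icc (0:ℝ) 1,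
      μ {ω | P1 ω j ≤ x} ≤ ENNReal.ofReal x)
    (hunif2 : ∀ j, H2 j = false → ∀ x ∈ Set.Icc (0:ℝ) 1,
      μ {ω | P2 ω j ≤ x} ≤ ENNReal.ofReal x)
    -- null independence-across-studies condition
    (hind1 : ∀ j, (H1 j = false ∨ H2 j = false) → H1 j = false →
      IndepFun (fun ω => P1 ω j) P2 μ)
    (hind2 : ∀ j, (H1 j = false ∨ H2 j = false) → H2 j = false →
      IndepFun (fun ω => P2 ω j) P1 μ)
    -- stable (measurable) selection rules
    (S1 S2 : (Fin m → ℝ) → Finset (Fin m))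
    (hstable1 : StableSelection S1) (hstable2 : StableSelection S2)
    (hS1 : ∀ j, MeasurableSet {p : Fin m → ℝ | j ∈ S1 p})
    (hS2 : ∀ j, MeasurableSet {p : Fin m → ℝ | j ∈ S2 p})
    (α α₁ : ℝ) (hα : α ∈ Set.Ioo (0:ℝ) 1) (hα₁ : α₁ ∈ Set.Ioo (0:ℝ) α) :
    ∫ ω, fdpRepl H1 H2
        (stepUpReject (↑(S1 (P1 ω) ∩ S2 (P2 ω))) (P1 ω) (P2 ω)
          (α₁ / ((S2 (P2 ω)).card * harmonic' (S2 (P2 ω)).card))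
          ((α - α₁) / ((S1 (P1 ω)).card * harmonic' (S1 (P1 ω)).card))) ∂μ
      ≤ α :=
  fdr_replicability_arbitrary_dependence_general μ m P1 P2 hP1 hP2 H1 H2 hunif1 hunif2 hind1 hind2
    S1 S2 hS1 hS2 α α₁ hα₁
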